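/- arXiv:2401.08388 — 6 statements merged into one kernel-verified Lean document; each statement's English description precedes it below -/
import Mathlib

section
/- For each c ≥ 7, the finite sequence (e(c,b)) for b = 2, 3, ..., ⌈(c+1)/2⌉ is log concave: e(c,b)^2 ≥ e(c,b−1)·e(c,b+1) for all 2 < b < ⌈(c+1)/2⌉. -/
/-! For `b ≥ 4` all three terms are given by the binomial formula and the powers of `2` balance
exactly, so the claim reduces to `C(n+2,k) · C(n,k+2) ≤ C(n+1,k+1)²`. Pascal's ratio identities
turn this into `C(n+2,k) · C(n,k+2) · P = C(n+1,k+1)² · Q` for explicit products `Q ≤ P`.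
For `b = 3` the left neighbour `e(c,2)` is at most `2`, and the claim becomes
`2 · C(c-4,2) ≤ (c-3)²`. -/

open Classical in
/-- The number `e(c,b)` of even continued fraction representations with
crossing number `c` and braid index `b`, given by its closed formula. -/
noncomputable def e (c b : ℕ) : ℕ :=
  if 3 ≤ c ∧ Odd c ∧ b = 2 then 2
  else if 3 ≤ c ∧ 3 ≤ b ∧ b ≤ (c + 2) / 2 then
    2 ^ (b - 2) * Nat.choose (c - b) (b - 2)
  else 0

theorem Nat.choose_add_two_mul_choose_add_two_le_sq (n k : ℕ) :
    (n + 2).choose k * n.choose (k + 2) ≤ (n + 1).choose (k + 1) ^ 2 := by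
  obtain hnk | hkn := lt_or_ge n k
  · simp [Nat.choose_eq_zero_of_lt (show n < k + 2 by omega)]
  have h₁ : (n + 1).choose k * (n + 2) = (n + 2).choose k * (n + 2 - k) :=
    Nat.choose_mul_succ_eq (n + 1) k
  have h₂ : (n + 1).choose (k + 1) * (k + 1) = (n + 1).choose k * (n + 1 - k) :=
    Nat.choose_succ_right_eq (n + 1) k
  have h₃ : n.choose (k + 2) * (k + 2) = n.choose (k + 1) * (n - (k + 1)) :=
    Nat.choose_succ_right_eq n (k + 1)
  have h₄ : n.choose (k + 1) * (n + 1) = (n + 1).choose (k + 1) * (n + 1 - (k + 1)) :=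
    Nat.choose_mul_succ_eq n (k + 1)
  set P := (n + 2 - k) * (n + 1 - k) * (k + 2) * (n + 1)
  set Q := (n + 2) * (k + 1) * (n - (k + 1)) * (n + 1 - (k + 1))
  have hPQ : (n + 2).choose k * n.choose (k + 2) * P = (n + 1).choose (k + 1) ^ 2 * Q := by
    linear_combination n.choose (k + 2) * (n + 1 - k) * (k + 2) * (n + 1) * h₁.symm +
      (n + 2) * n.choose (k + 2) * (k + 2) * (n + 1) * h₂.symm +
      (n + 1).choose (k + 1) * (k + 1) * (n + 2) * (n + 1) * h₃ +
      (n + 1).choose (k + 1) * (k + 1) * (n + 2) * (n - (k + 1)) * h₄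
  have hQP : Q ≤ P :=
    calc Q = (n + 2) * (k + 1) * ((n - (k + 1)) * (n + 1 - (k + 1))) := by ring
      _ ≤ (n + 1) * (k + 2) * ((n + 2 - k) * (n + 1 - k)) :=
        Nat.mul_le_mul (by nlinarith) (Nat.mul_le_mul (by omega) (by omega))
      _ = P := by ring
  have hP : 0 < P :=
    Nat.mul_pos (Nat.mul_pos (Nat.mul_pos (by omega) (by omega)) (by omega)) (by omega)
  exact Nat.le_of_mul_le_mul_right (hPQ ▸ Nat.mul_le_mul_left _ hQP) hP

lemma e_eq_pow_mul_choose {c b : ℕ} (hb : 3 ≤ b) (hbc : b ≤ (c + 2) / 2) :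
    e c b = 2 ^ (b - 2) * (c - b).choose (b - 2) := by
  rw [e, if_neg (by omega), if_pos (by omega)]

lemma e_sub_one_mul_e_add_one_le_sq {c b : ℕ} (hb : 4 ≤ b) (hbc : b < (c + 2) / 2) :
    e c (b - 1) * e c (b + 1) ≤ e c b ^ 2 := by
  rw [e_eq_pow_mul_choose (by omega) (by omega), e_eq_pow_mul_choose (by omega) hbc,
    e_eq_pow_mul_choose (by omega) hbc.le]
  obtain ⟨k, rfl⟩ : ∃ k, b = k + 3 := ⟨b - 3, by omega⟩
  obtain ⟨n, rfl⟩ : ∃ n, c = n + k + 4 := ⟨c - k - 4, by omega⟩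
  simp only [show n + k + 4 - (k + 3 - 1) = n + 2 by omega,
    show n + k + 4 - (k + 3) = n + 1 by omega, show n + k + 4 - (k + 3 + 1) = n by omega, show k + 3 - 1 - 2 = k by omega,
    show k + 3 - 2 = k + 1 by omega, show k + 3 + 1 - 2 = k + 2 by omega]
  calc 2 ^ k * (n + 2).choose k * (2 ^ (k + 2) * n.choose (k + 2))
      = (2 ^ (k + 1)) ^ 2 * ((n + 2).choose k * n.choose (k + 2)) := by ring
    _ ≤ (2 ^ (k + 1)) ^ 2 * (n + 1).choose (k + 1) ^ 2 :=
        Nat.mul_le_mul_left _ (Nat.choose_add_two_mul_choose_add_two_le_sq n k)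
    _ = (2 ^ (k + 1) * (n + 1).choose (k + 1)) ^ 2 := by ring

lemma e_two_le (c : ℕ) : e c 2 ≤ 2 := by
  unfold e; split_ifs <;> omega

lemma e_two_mul_e_four_le_sq {c : ℕ} (hc : 3 < (c + 2) / 2) : e c 2 * e c 4 ≤ e c 3 ^ 2 := by
  obtain ⟨n, rfl⟩ : ∃ n, c = n + 4 := ⟨c - 4, by omega⟩
  have h₃ : e (n + 4) 3 = 2 * (n + 1) := by simp [e_eq_pow_mul_choose le_rfl hc.le]
  have h₄ : e (n + 4) 4 = 4 * n.choose 2 := e_eq_pow_mul_choose (by omega) hc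
  have hchoose : n.choose 2 * 2 ≤ n * n :=
    (Nat.choose_two_right n ▸ Nat.div_mul_le_self _ 2).trans (Nat.mul_le_mul_left n (n.sub_le 1))
  calc e (n + 4) 2 * e (n + 4) 4 ≤ 2 * e (n + 4) 4 := Nat.mul_le_mul_right _ (e_two_le _)
    _ ≤ e (n + 4) 3 ^ 2 := by rw [h₃, h₄]; nlinarith

theorem e_log_concave_general (c : ℕ) (b : ℕ) (hb1 : 2 < b)
    (hb2 : b < (c + 2) / 2) :
    e c (b - 1) * e c (b + 1) ≤ (e c b) ^ 2 := by
  obtain rfl | hb := (show 3 ≤ b from hb1).eq_or_lt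
  · exact e_two_mul_e_four_le_sq hb2
  · exact e_sub_one_mul_e_add_one_le_sq hb hb2

theorem e_log_concave (c : ℕ) (hc : 7 ≤ c) (b : ℕ) (hb1 : 2 < b)
    (hb2 : b < (c + 2) / 2) :
    e c (b - 1) * e c (b + 1) ≤ (e c b) ^ 2 :=
  e_log_concave_general c b hb1 hb2
end

section
/- For each c ≥ 7, the maximum of e(c,b) over 2 ≤ b ≤ ⌈(c+1)/2⌉ is attained at b = ⌈c/3⌉ + 1; that is, e(c, ⌈c/3⌉+1) ≥ e(c,b) for all b in that range. -/
/-!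
For `b ≥ 3` put `n = c - 2` and `k = b - 2`, so that `e c b = 2 ^ k * C(n - k, k)`. The ratio of
consecutive terms of `k ↦ 2 ^ k * C(n - k, k)` is `2 (n - 2k) (n - 2k - 1) / ((k + 1) (n - k))`,
which is at least `1` exactly when `3k + 2 ≤ n`. The sequence is therefore unimodal with peak at
`k = (n + 1) / 3`, i.e. `b = ⌈c / 3⌉ + 1`. For `c ≥ 7` the peak is at least `2`, which bounds
all remaining values of `e`.
-/

def twoPowChoose (n k : ℕ) : ℕ := 2 ^ k * (n - k).choose k

theorem Nat.succ_mul_succ_mul_choose_succ (m k : ℕ) :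
    (k + 1) * (m + 1) * m.choose (k + 1) = (m - k) * (m + 1 - k) * (m + 1).choose k := by
  calc (k + 1) * (m + 1) * m.choose (k + 1)
      = (m + 1) * (m.choose (k + 1) * (k + 1)) := by ring
    _ = (m + 1) * (m.choose k * (m - k)) := by rw [Nat.choose_succ_right_eq]
    _ = (m - k) * (m.choose k * (m + 1)) := by ring
    _ = (m - k) * ((m + 1).choose k * (m + 1 - k)) := by rw [Nat.choose_mul_succ_eq]
    _ = (m - k) * (m + 1 - k) * (m + 1).choose k := by ring

theorem succ_mul_sub_mul_twoPowChoose_succ {n k : ℕ} (h : k + 1 ≤ n) :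
    (k + 1) * (n - k) * twoPowChoose n (k + 1)
      = 2 * ((n - 2 * k - 1) * (n - 2 * k)) * twoPowChoose n k := by
  obtain ⟨m, rfl⟩ : ∃ m, n = m + k + 1 := ⟨n - (k + 1), by omega⟩
  have hsub : m + k + 1 - (k + 1) = m ∧ m + k + 1 - k = m + 1 ∧
      m + k + 1 - 2 * k - 1 = m - k ∧ m + k + 1 - 2 * k = m + 1 - k := by omega
  rw [twoPowChoose, twoPowChoose, hsub.1, hsub.2.1, hsub.2.2.1, hsub.2.2.2]
  calc (k + 1) * (m + 1) * (2 ^ (k + 1) * m.choose (k + 1))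
      = 2 ^ k * 2 * ((k + 1) * (m + 1) * m.choose (k + 1)) := by ring
    _ = 2 ^ k * 2 * ((m - k) * (m + 1 - k) * (m + 1).choose k) := by
        rw [Nat.succ_mul_succ_mul_choose_succ]
    _ = 2 * ((m - k) * (m + 1 - k)) * (2 ^ k * (m + 1).choose k) := by ring

theorem twoPowChoose_le_succ {n k : ℕ} (h : 3 * k + 2 ≤ n) :
    twoPowChoose n k ≤ twoPowChoose n (k + 1) := by
  have hratio : (k + 1) * (n - k) ≤ 2 * ((n - 2 * k - 1) * (n - 2 * k)) := by
    zify [(by omega : k ≤ n), (by omega : 2 * k ≤ n), (by omega : 1 ≤ n - 2 * k)]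
    nlinarith
  have hpos : 0 < (k + 1) * (n - k) := Nat.mul_pos k.succ_pos (by omega)
  refine Nat.le_of_mul_le_mul_left ?_ hpos
  rw [succ_mul_sub_mul_twoPowChoose_succ (by omega)]
  exact Nat.mul_le_mul_right _ hratio

theorem twoPowChoose_succ_le {n k : ℕ} (h : n ≤ 3 * k + 1) :
    twoPowChoose n (k + 1) ≤ twoPowChoose n k := by
  rcases lt_or_ge n (2 * k + 2) with hsmall | hlarge
  · simp [twoPowChoose, Nat.choose_eq_zero_of_lt (by omega : n - (k + 1) < k + 1)]
  have hratio : 2 * ((n - 2 * k - 1) * (n - 2 * k)) ≤ (k + 1) * (n - k) := by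
    zify [(by omega : k ≤ n), (by omega : 2 * k ≤ n), (by omega : 1 ≤ n - 2 * k)]
    nlinarith
  have hpos : 0 < 2 * ((n - 2 * k - 1) * (n - 2 * k)) :=
    Nat.mul_pos two_pos (Nat.mul_pos (by omega) (by omega))
  refine Nat.le_of_mul_le_mul_left ?_ hpos
  rw [← succ_mul_sub_mul_twoPowChoose_succ (by omega)]
  exact Nat.mul_le_mul_right _ hratio

theorem twoPowChoose_le_mode (n k : ℕ) : twoPowChoose n k ≤ twoPowChoose n ((n + 1) / 3) := by
  rcases le_total k ((n + 1) / 3) with hk | hk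
  · refine monotoneOn_of_le_add_one Set.ordConnected_Iic ?_ hk le_rfl hk
    intro j _ _ hj
    exact twoPowChoose_le_succ (by simp only [Set.mem_Iic] at hj; omega)
  · refine antitoneOn_of_add_one_le Set.ordConnected_Ici ?_ le_rfl hk hk
    intro j _ hj _
    exact twoPowChoose_succ_le (by simp only [Set.mem_Ici] at hj; omega)

theorem two_le_twoPowChoose {n k : ℕ} (hk : 1 ≤ k) (hkn : 2 * k ≤ n) : 2 ≤ twoPowChoose n k :=
  calc 2 = 2 ^ 1 * 1 := rfl
    _ ≤ 2 ^ k * (n - k).choose k :=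
      Nat.mul_le_mul (Nat.pow_le_pow_right two_pos hk) (Nat.choose_pos (by omega))

theorem e_le_max (c b : ℕ) : e c b ≤ max 2 (twoPowChoose (c - 2) (b - 2)) := by
  unfold e
  split_ifs
  · exact le_max_left _ _
  · refine le_of_eq_of_le ?_ (le_max_right _ _)
    rw [twoPowChoose, show c - 2 - (b - 2) = c - b by omega]
  · exact Nat.zero_le _

theorem e_eq_twoPowChoose {c b : ℕ} (hc : 3 ≤ c) (hb : 3 ≤ b) (hbc : b ≤ (c + 2) / 2) :
    e c b = twoPowChoose (c - 2) (b - 2) := by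
  rw [e, if_neg (by omega), if_pos ⟨hc, hb, hbc⟩, twoPowChoose,
    show c - 2 - (b - 2) = c - b by omega]

theorem e_mode_general (c : ℕ) (hc : 7 ≤ c) (b : ℕ) :
    e c b ≤ e c ((c + 2) / 3 + 1) := by
  have hpeak : e c ((c + 2) / 3 + 1) = twoPowChoose (c - 2) ((c - 2 + 1) / 3) := by
    rw [e_eq_twoPowChoose (by omega) (by omega) (by omega)]
    congr 1
    omega
  rw [hpeak]
  exact (e_le_max c b).trans
    (max_le (two_le_twoPowChoose (by omega) (by omega)) (twoPowChoose_le_mode _ _))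

theorem e_mode (c : ℕ) (hc : 7 ≤ c) (b : ℕ) (hb1 : 2 ≤ b)
    (hb2 : b ≤ (c + 2) / 2) :
    e c b ≤ e c ((c + 2) / 3 + 1) :=
  e_mode_general c hc b
end

section
/- For c ≥ 3, tbi(c) = ((6c+22)·2^{c−2} + (6c−46)·(−1)^c)/27, where tbi(c) = Σ_{b=2}^{⌈(c+1)/2⌉} b·e(c,b). -/
/-- The total braid index. -/
noncomputable def tbi (c : ℕ) : ℕ := ∑ b ∈ Finset.Icc 2 ((c + 2) / 2), b * e c b

/-!
Substituting `k = b - 2` and `n = c - 2`, the terms `b · e(c,b)` with `b ≥ 3` are those of the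
diagonal sum `D_g(n) = ∑ₖ g(k) · C(n-k, k)` with weight `g(k) = (k+2) 2^k`, while the `b = 2` term
only contributes a sign correction: `tbi(n+2) = D_g(n) - 2 (-1)^n`. Pascal's rule gives the
Fibonacci-type recurrence `D_g(n+2) = D_g(n+1) + D_{g(·+1)}(n)`. For `g = 2^k` this is the
Jacobsthal recurrence, and for `g = (k+2) 2^k` it is the same recurrence with the Jacobsthal sum as
inhomogeneity, since `g(k+1) = 2 g(k) + 2^(k+1)`; both closed forms follow by two-step induction.
-/

open Finset

section DiagonalSum

variable {R : Type*} [CommSemiring R]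

def diagonalSum (g : ℕ → R) (n : ℕ) : R :=
  ∑ p ∈ antidiagonal n, g p.1 * p.2.choose p.1

theorem diagonalSum_add_two (g : ℕ → R) (n : ℕ) :
    diagonalSum g (n + 2) = diagonalSum g (n + 1) + diagonalSum (fun k ↦ g (k + 1)) n := by
  simp only [diagonalSum, Nat.antidiagonal_succ_succ', Nat.antidiagonal_succ, sum_cons, sum_map]
  simp only [Function.Embedding.coe_prodMap, Function.Embedding.coeFn_mk,
    Function.Embedding.refl_apply, Prod.map_fst, Prod.map_snd, Nat.succ_eq_add_one,
    Nat.choose_zero_right, Nat.choose_zero_succ, Nat.choose_succ_succ, Nat.cast_add, Nat.cast_one,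
    Nat.cast_zero, mul_one, mul_zero, zero_add, mul_add, sum_add_distrib]
  ring

theorem diagonalSum_eq_sum_range (g : ℕ → R) (n : ℕ) :
    diagonalSum g n = ∑ k ∈ range (n + 1), g k * (n - k).choose k :=
  Nat.sum_antidiagonal_eq_sum_range_succ (fun i j ↦ g i * j.choose i) n

end DiagonalSum

theorem three_mul_diagonalSum_two_pow (n : ℕ) :
    3 * diagonalSum (fun k ↦ (2 : ℤ) ^ k) n = 2 ^ (n + 1) + (-1) ^ n := by
  induction n using Nat.twoStepInduction with
  | zero => simp [diagonalSum]
  | one => simp [diagonalSum, Nat.antidiagonal_succ]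
  | more n ih₀ ih₁ =>
    have hshift : diagonalSum (fun k ↦ (2 : ℤ) ^ (k + 1)) n = 2 * diagonalSum (2 ^ ·) n := by
      simp only [diagonalSum, mul_sum]
      exact sum_congr rfl fun _ _ ↦ by ring
    rw [diagonalSum_add_two, hshift]
    linear_combination ih₁ + 2 * ih₀

theorem twenty_seven_mul_diagonalSum_add_two_mul_two_pow (n : ℕ) :
    27 * diagonalSum (fun k ↦ ((k : ℤ) + 2) * 2 ^ k) n =
      (6 * n + 34) * 2 ^ n + (6 * n + 20) * (-1) ^ n := by
  induction n using Nat.twoStepInduction with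
  | zero => simp [diagonalSum]
  | one => simp [diagonalSum, Nat.antidiagonal_succ]
  | more n ih₀ ih₁ =>
    have hshift : diagonalSum (fun k ↦ ((↑(k + 1) : ℤ) + 2) * 2 ^ (k + 1)) n =
        2 * diagonalSum (fun k ↦ ((k : ℤ) + 2) * 2 ^ k) n + 2 * diagonalSum (2 ^ ·) n := by
      simp only [diagonalSum, mul_sum, ← sum_add_distrib]
      exact sum_congr rfl fun _ _ ↦ by push_cast; ring
    rw [diagonalSum_add_two, hshift]
    push_cast at ih₁ ⊢
    linear_combination ih₁ + 2 * ih₀ + 18 * three_mul_diagonalSum_two_pow n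

theorem e_eq_of_three_le (c : ℕ) {b : ℕ} (hb : 3 ≤ b) :
    e c b = 2 ^ (b - 2) * (c - b).choose (b - 2) := by
  rw [e, if_neg (by omega)]
  split_ifs with h
  · rfl
  · rw [Nat.choose_eq_zero_of_lt (by omega), mul_zero]

theorem two_mul_e_two {c : ℕ} (hc : 2 ≤ c) : 2 * (e c 2 : ℤ) = 2 - 2 * (-1) ^ c := by
  rcases Nat.even_or_odd c with h | h
  · simp [e, h.neg_one_pow, Nat.not_odd_iff_even.mpr h]
  · have hc3 : 3 ≤ c := by obtain ⟨k, rfl⟩ := h; omega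
    simp [e, h.neg_one_pow, h, hc3]

theorem tbi_add_two (n : ℕ) :
    (tbi (n + 2) : ℤ) = diagonalSum (fun k ↦ ((k : ℤ) + 2) * 2 ^ k) n - 2 * (-1) ^ n := by
  set f : ℕ → ℤ := fun b ↦ b * 2 ^ (b - 2) * (n + 2 - b).choose (b - 2)
  have hsummand : ∀ b ∈ Icc 2 ((n + 2 + 2) / 2), (b * e (n + 2) b : ℤ) =
      f b + if b = 2 then 2 * (e (n + 2) 2 : ℤ) - 2 else 0 := by
    intro b hb
    rcases (mem_Icc.mp hb).1.eq_or_lt with rfl | hb3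
    · simp [f]
    · simp [f, e_eq_of_three_le _ hb3, hb3.ne', mul_assoc]
  have hextend : ∑ b ∈ Icc 2 ((n + 2 + 2) / 2), f b = ∑ b ∈ Icc 2 (n + 2), f b := by
    refine sum_subset (Icc_subset_Icc_right (by omega)) fun b hb hbm ↦ ?_
    simp only [mem_Icc] at hb hbm
    simp [f, Nat.choose_eq_zero_of_lt (show n + 2 - b < b - 2 by omega)]
  have hreindex : ∑ b ∈ Icc 2 (n + 2), f b = diagonalSum (fun k ↦ ((k : ℤ) + 2) * 2 ^ k) n := by
    rw [← Ico_add_one_right_eq_Icc, sum_Ico_eq_sum_range, diagonalSum_eq_sum_range,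
      show n + 2 + 1 - 2 = n + 1 by omega]
    refine sum_congr rfl fun k _ ↦ ?_
    simp [f, add_comm]
  push_cast [tbi]
  rw [sum_congr rfl hsummand, sum_add_distrib, sum_ite_eq', if_pos (by simp), hextend, hreindex,
    two_mul_e_two (by omega)]
  ring

theorem tbi_closed_formula (c : ℕ) (hc : 3 ≤ c) :
    (27 : ℤ) * tbi c = (6 * (c : ℤ) + 22) * 2 ^ (c - 2) + (6 * (c : ℤ) - 46) * (-1) ^ c := by
  obtain ⟨n, rfl⟩ : ∃ n, c = n + 2 := ⟨c - 2, by omega⟩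
  rw [tbi_add_two, Nat.add_sub_cancel]
  push_cast
  linear_combination twenty_seven_mul_diagonalSum_add_two_mul_two_pow n
end

section
/- Define tbi_p(c) = Σ_b b·e_p(c,b). For c ≥ 7, tbi_p(c) = tbi_p(c−2) + 2·tbi_p(c−4) + 4·e_p(c−4), and for c ≥ 3, tbi_p(c) equals ((3c+13)·2^{c/2} + (12c+14)·(−1)^{c/2})/27 if c is even, and ((6c+14)·2^{(c−1)/2} − (12c+8)·(−1)^{(c−1)/2})/27 if c is odd. -/
open Classical in
/-- The number `e_p(c,b)` of palindromic or anti-palindromic even continued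
fraction representations with crossing number `c` and braid index `b`,
given by its closed formula. -/
noncomputable def ep (c b : ℕ) : ℕ :=
  if 2 ≤ b ∧ b ≤ (c + 2) / 2 ∧ Even c ∧ Odd b then
    2 ^ ((b - 1) / 2) * Nat.choose ((c - b - 1) / 2) ((b - 3) / 2)
  else if 2 ≤ b ∧ b ≤ (c + 2) / 2 ∧ Odd c ∧ Even b then
    2 ^ (b / 2) * Nat.choose ((c - b - 1) / 2) ((b - 2) / 2)
  else 0

/-- `e_p(c)`, the total number of (anti-)palindromic representations. -/
noncomputable def epTot (c : ℕ) : ℕ := ∑ b ∈ Finset.Icc 2 ((c + 2) / 2), ep c b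

/-- The total palindromic braid index. -/
noncomputable def tbip (c : ℕ) : ℕ := ∑ b ∈ Finset.Icc 2 ((c + 2) / 2), b * ep c b

/-! Writing `c = b + 2r + 1`, the formula for `e_p(c, b)` becomes `2^⌊b/2⌋ · C(r, ⌊b/2⌋ - 1)`, so
Pascal's rule gives `e_p(c + 4, b + 2) = e_p(c + 2, b + 2) + 2 e_p(c, b)`. Summing over `b` with
weights `1` and `b` yields the recursions for `e_p` and `tbi_p`; the closed formulas satisfy the same
recursions within each parity class and agree with `e_p`, `tbi_p` at `c = 3, 4, 5, 6`. -/

open Finset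

theorem ep_eq_zero_of_lt_two {c b : ℕ} (hb : b < 2) : ep c b = 0 := by
  rw [ep, if_neg, if_neg] <;> rintro ⟨h, -⟩ <;> omega

theorem ep_eq_zero_of_lt {c b : ℕ} (hb : (c + 2) / 2 < b) : ep c b = 0 := by
  rw [ep, if_neg, if_neg] <;> rintro ⟨-, h, -⟩ <;> omega

theorem ep_eq_zero_of_even_add {c b : ℕ} (h : Even (c + b)) : ep c b = 0 := by
  rw [Nat.even_iff] at h
  rw [ep, if_neg, if_neg] <;> rintro ⟨-, -, hc, hb⟩ <;>
    simp only [Nat.even_iff, Nat.odd_iff] at hc hb <;> omega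

/-- The range condition `b ≤ (c + 2) / 2` in `ep` is exactly where this binomial coefficient
does not vanish. -/
theorem ep_add_two_mul_add_one {b : ℕ} (r : ℕ) (hb : 2 ≤ b) :
    ep (b + 2 * r + 1) b = 2 ^ (b / 2) * r.choose (b / 2 - 1) := by
  unfold ep
  simp only [Nat.even_iff, Nat.odd_iff]
  split_ifs with h₁ h₂
  · rw [show (b - 1) / 2 = b / 2 by omega, show (b + 2 * r + 1 - b - 1) / 2 = r by omega,
      show (b - 3) / 2 = b / 2 - 1 by omega]
  · rw [show (b + 2 * r + 1 - b - 1) / 2 = r by omega, show (b - 2) / 2 = b / 2 - 1 by omega]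
  · rw [Nat.choose_eq_zero_of_lt (by omega), mul_zero]

theorem ep_add_four {c : ℕ} (hc : 1 ≤ c) (b : ℕ) :
    ep (c + 4) (b + 2) = ep (c + 2) (b + 2) + 2 * ep c b := by
  rcases Nat.even_or_odd (c + b) with h | h
  · rw [ep_eq_zero_of_even_add h, ep_eq_zero_of_even_add (by rw [Nat.even_iff] at h ⊢; omega),
      ep_eq_zero_of_even_add (by rw [Nat.even_iff] at h ⊢; omega)]
  rw [Nat.odd_iff] at h
  rcases lt_or_ge b c with hbc | hcb
  · obtain ⟨r, rfl⟩ : ∃ r, c = b + 2 * r + 1 := ⟨(c - b - 1) / 2, by omega⟩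
    rw [show b + 2 * r + 1 + 4 = b + 2 + 2 * (r + 1) + 1 by ring,
      show b + 2 * r + 1 + 2 = b + 2 + 2 * r + 1 by ring,
      ep_add_two_mul_add_one _ (by omega), ep_add_two_mul_add_one _ (by omega),
      show (b + 2) / 2 = b / 2 + 1 by omega, Nat.add_sub_cancel]
    rcases lt_or_ge b 2 with hb | hb
    · rw [ep_eq_zero_of_lt_two hb, show b / 2 = 0 by omega]
      simp
    · obtain ⟨i, hi⟩ : ∃ i, b / 2 = i + 1 := ⟨b / 2 - 1, by omega⟩
      rw [ep_add_two_mul_add_one _ hb, hi, Nat.choose_succ_succ', Nat.add_sub_cancel, pow_succ]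
      ring
  · rw [ep_eq_zero_of_lt (by omega), ep_eq_zero_of_lt (by omega), ep_eq_zero_of_lt (by omega)]

theorem sum_Icc_mul_ep_eq_sum_range (f : ℕ → ℕ) {c N : ℕ} (hN : (c + 2) / 2 < N) :
    ∑ b ∈ Icc 2 ((c + 2) / 2), f b * ep c b = ∑ b ∈ range N, f b * ep c b := by
  refine sum_subset (fun b hb => ?_) fun b _ hb => ?_
  · simp only [mem_Icc, mem_range] at hb ⊢
    omega
  · simp only [mem_Icc, not_and_or, not_le] at hb
    rcases hb with hb | hb
    · rw [ep_eq_zero_of_lt_two hb, mul_zero]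
    · rw [ep_eq_zero_of_lt hb, mul_zero]

theorem tbip_eq_sum_range {c N : ℕ} (hN : (c + 2) / 2 < N) :
    tbip c = ∑ b ∈ range N, b * ep c b :=
  sum_Icc_mul_ep_eq_sum_range id hN

theorem epTot_eq_sum_range {c N : ℕ} (hN : (c + 2) / 2 < N) :
    epTot c = ∑ b ∈ range N, ep c b := by
  rw [epTot]
  simpa using sum_Icc_mul_ep_eq_sum_range 1 hN

theorem sum_range_mul_ep_add_four (f : ℕ → ℕ) {c : ℕ} (hc : 1 ≤ c) (N : ℕ) :
    ∑ b ∈ range (N + 2), f b * ep (c + 4) b =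
      ∑ b ∈ range (N + 2), f b * ep (c + 2) b + 2 * ∑ b ∈ range N, f (b + 2) * ep c b := by
  simp only [sum_range_succ' _ (N + 1), sum_range_succ' _ N, add_assoc, Nat.reduceAdd,
    ep_add_four hc, mul_add, sum_add_distrib, mul_sum]
  simp [ep_eq_zero_of_lt_two, mul_left_comm]

theorem epTot_add_four {c : ℕ} (hc : 1 ≤ c) :
    epTot (c + 4) = epTot (c + 2) + 2 * epTot c := by
  have key := sum_range_mul_ep_add_four 1 hc (c / 2 + 2)
  simp only [Pi.one_apply, one_mul] at key
  rwa [← epTot_eq_sum_range (by omega), ← epTot_eq_sum_range (by omega),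
    ← epTot_eq_sum_range (by omega)] at key

theorem tbip_add_four {c : ℕ} (hc : 1 ≤ c) :
    tbip (c + 4) = tbip (c + 2) + 2 * tbip c + 4 * epTot c := by
  have key := sum_range_mul_ep_add_four id hc (c / 2 + 2)
  simp only [id, add_mul, sum_add_distrib, ← mul_sum] at key
  rw [← tbip_eq_sum_range (by omega), ← tbip_eq_sum_range (by omega),
    ← tbip_eq_sum_range (by omega), ← epTot_eq_sum_range (by omega)] at key
  rw [key]
  ring

theorem epTot_tbip_closed_form_even {m : ℕ} (hm : 2 ≤ m) :
    3 * (epTot (2 * m) : ℤ) = 2 ^ m + 2 * (-1) ^ m ∧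
      27 * (tbip (2 * m) : ℤ) = (6 * m + 13) * 2 ^ m + (24 * m + 14) * (-1) ^ m := by
  obtain ⟨n, rfl⟩ : ∃ n, m = n + 2 := ⟨m - 2, by omega⟩
  clear hm
  induction n using Nat.twoStepInduction with
  | zero => norm_num [show epTot 4 = 2 ∧ tbip 4 = 6 by decide]
  | one => norm_num [show epTot 6 = 2 ∧ tbip 6 = 6 by decide]
  | more n ih₀ ih₁ =>
    rw [show 2 * (n + 2 + 2) = 2 * (n + 2) + 4 by ring, epTot_add_four (by omega),
      tbip_add_four (by omega), show 2 * (n + 2) + 2 = 2 * (n + 1 + 2) by ring]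
    push_cast at ih₀ ih₁ ⊢
    constructor
    · linear_combination ih₁.1 + 2 * ih₀.1
    · linear_combination ih₁.2 + 2 * ih₀.2 + 36 * ih₀.1

theorem epTot_tbip_closed_form_odd {m : ℕ} (hm : 1 ≤ m) :
    3 * (epTot (2 * m + 1) : ℤ) = 2 ^ (m + 1) - 2 * (-1) ^ m ∧
      27 * (tbip (2 * m + 1) : ℤ) = (12 * m + 20) * 2 ^ m - (24 * m + 20) * (-1) ^ m := by
  obtain ⟨n, rfl⟩ : ∃ n, m = n + 1 := ⟨m - 1, by omega⟩
  clear hm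
  induction n using Nat.twoStepInduction with
  | zero => norm_num [show epTot 3 = 2 ∧ tbip 3 = 4 by decide]
  | one => norm_num [show epTot 5 = 2 ∧ tbip 5 = 4 by decide]
  | more n ih₀ ih₁ =>
    rw [show 2 * (n + 2 + 1) + 1 = 2 * (n + 1) + 1 + 4 by ring, epTot_add_four (by omega),
      tbip_add_four (by omega), show 2 * (n + 1) + 1 + 2 = 2 * (n + 1 + 1) + 1 by ring]
    push_cast at ih₀ ih₁ ⊢
    constructor
    · linear_combination ih₁.1 + 2 * ih₀.1
    · linear_combination ih₁.2 + 2 * ih₀.2 + 36 * ih₀.1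

theorem tbip_recursion_and_closed_formula :
    (∀ c : ℕ, 7 ≤ c →
      tbip c = tbip (c - 2) + 2 * tbip (c - 4) + 4 * epTot (c - 4)) ∧
    (∀ c : ℕ, 3 ≤ c →
      (27 : ℤ) * tbip c =
        if Even c then
          (3 * (c : ℤ) + 13) * 2 ^ (c / 2) + (12 * (c : ℤ) + 14) * (-1) ^ (c / 2)
        else
          (6 * (c : ℤ) + 14) * 2 ^ ((c - 1) / 2) - (12 * (c : ℤ) + 8) * (-1) ^ ((c - 1) / 2)) := by
  refine ⟨fun c hc => ?_, fun c hc => ?_⟩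
  · obtain ⟨k, rfl⟩ : ∃ k, c = k + 4 := ⟨c - 4, by omega⟩
    simpa using tbip_add_four (c := k) (by omega)
  · obtain ⟨m, rfl | rfl⟩ := Nat.even_or_odd' c
    · rw [if_pos (even_two_mul m), Nat.mul_div_cancel_left m two_pos,
        (epTot_tbip_closed_form_even (by omega)).2]
      push_cast
      ring
    · rw [if_neg (Nat.not_even_two_mul_add_one m), show (2 * m + 1 - 1) / 2 = m by omega,
        (epTot_tbip_closed_form_odd (by omega)).2]
      push_cast
      ring
end

section
/- Define tbi²(c) = Σ_b b²·e(c,b). For c ≥ 6, tbi²(c) = 3·tbi²(c−2) + 2·tbi²(c−3) + ((6c+17)·2^{c−3} + 8·(−1)^c)/9, and for c ≥ 3, tbi²(c) = ((3c²+24c+37)·2^{c−1} + (12c²+30c−302)·(−1)^c)/81. -/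
/-- The total square braid index. -/
noncomputable def tbi2 (c : ℕ) : ℕ := ∑ b ∈ Finset.Icc 2 ((c + 2) / 2), b ^ 2 * e c b

open Finset

/-- For `w = 1` this is the Jacobsthal number `J (n + 1) = (2 ^ (n + 1) + (-1) ^ n) / 3`. -/
def jacobsthalSum (w : ℕ → ℕ) (n : ℕ) : ℕ :=
  ∑ k ∈ range (n + 1), w k * (n - k).choose k * 2 ^ k

theorem jacobsthalSum_succ (w : ℕ → ℕ) (n : ℕ) :
    jacobsthalSum w (n + 1) =
      w 0 + ∑ k ∈ range (n + 1), w (k + 1) * (n - k).choose (k + 1) * 2 ^ (k + 1) := by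
  rw [jacobsthalSum, sum_range_succ', add_comm]
  simp

theorem jacobsthalSum_add_two (w : ℕ → ℕ) (n : ℕ) :
    jacobsthalSum w (n + 2) =
      jacobsthalSum w (n + 1) + 2 * jacobsthalSum (fun k => w (k + 1)) n := by
  have pascal : ∀ k ∈ range (n + 1),
      w (k + 1) * (n + 1 - k).choose (k + 1) * 2 ^ (k + 1) =
        w (k + 1) * (n - k).choose (k + 1) * 2 ^ (k + 1)
          + 2 * (w (k + 1) * (n - k).choose k * 2 ^ k) := by
    intro k hk
    rw [Nat.sub_add_comm (mem_range_succ_iff.1 hk), Nat.choose_succ_succ']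
    ring
  rw [jacobsthalSum_succ w (n + 1), jacobsthalSum_succ w n, jacobsthalSum, sum_range_succ,
    sum_congr rfl pascal, sum_add_distrib, mul_sum]
  simp only [Nat.sub_self, Nat.choose_zero_succ, mul_zero, zero_mul, add_zero]
  ring

theorem jacobsthalSum_quadratic (a b c n : ℕ) :
    (jacobsthalSum (fun k => a * k ^ 2 + b * k + c) n : ℚ) =
      a * ((6 * n ^ 2 + 2) * 2 ^ n + (12 * n ^ 2 + 6 * n - 2) * (-1) ^ n) / 81
        + b * ((6 * n - 2) * 2 ^ n + (6 * n + 2) * (-1) ^ n) / 27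
        + c * (2 ^ (n + 1) + (-1) ^ n) / 3 := by
  induction n using Nat.twoStepInduction generalizing a b c with
  | zero => norm_num [jacobsthalSum]
  | one => norm_num [jacobsthalSum, sum_range_succ]
  | more n ih₀ ih₁ =>
    have shift : (fun k => a * (k + 1) ^ 2 + b * (k + 1) + c) =
        fun k => a * k ^ 2 + (2 * a + b) * k + (a + b + c) := by
      funext k; ring
    rw [jacobsthalSum_add_two, shift]
    push_cast
    rw [ih₀, ih₁]
    push_cast
    ring

theorem jacobsthalSum_eq_sum_range_half (w : ℕ → ℕ) (n : ℕ) :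
    jacobsthalSum w n = ∑ k ∈ range (n / 2 + 1), w k * (n - k).choose k * 2 ^ k := by
  refine (sum_subset (range_subset_range.2 (by omega)) fun k _ hk => ?_).symm
  rw [mem_range] at hk
  rw [Nat.choose_eq_zero_of_lt (by omega), mul_zero, zero_mul]

theorem e_two {c : ℕ} (hc : 3 ≤ c) : (e c 2 : ℚ) = 1 - (-1) ^ c := by
  rcases Nat.even_or_odd c with h | h
  · simp [e, h.neg_one_pow, Nat.not_odd_iff_even.2 h]
  · norm_num [e, hc, h, h.neg_one_pow]

theorem e_of_three_le {c b : ℕ} (hc : 3 ≤ c) (hb : 3 ≤ b) (hbc : b ≤ (c + 2) / 2) :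
    e c b = 2 ^ (b - 2) * (c - b).choose (b - 2) := by
  rw [e, if_neg (by omega), if_pos ⟨hc, hb, hbc⟩]

theorem tbi2_add_four {c : ℕ} (hc : 3 ≤ c) :
    tbi2 c + 4 = jacobsthalSum (fun k => (k + 2) ^ 2) (c - 2) + 4 * e c 2 := by
  have hm : (c + 2) / 2 + 1 - 2 = (c - 2) / 2 + 1 := by omega
  rw [tbi2, ← Ico_add_one_right_eq_Icc, sum_Ico_eq_sum_range, hm, sum_range_succ',
    jacobsthalSum_eq_sum_range_half, sum_range_succ']
  have hterm : ∀ k ∈ range ((c - 2) / 2), (2 + (k + 1)) ^ 2 * e c (2 + (k + 1)) =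
      (k + 1 + 2) ^ 2 * (c - 2 - (k + 1)).choose (k + 1) * 2 ^ (k + 1) := by
    intro k hk
    rw [mem_range] at hk
    rw [e_of_three_le hc (by omega) (by omega), Nat.sub_sub, add_comm (k + 1) 2,
      Nat.add_sub_cancel_left]
    ring
  rw [sum_congr rfl hterm]
  simp only [Nat.sub_zero, Nat.choose_zero_right, pow_zero, mul_one]
  ring

theorem tbi2_eq_jacobsthalSum {c : ℕ} (hc : 3 ≤ c) :
    (tbi2 c : ℚ) = jacobsthalSum (fun k => (k + 2) ^ 2) (c - 2) - 4 * (-1) ^ c := by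
  have h := congrArg (Nat.cast : ℕ → ℚ) (tbi2_add_four hc)
  push_cast at h
  rw [e_two hc] at h
  linarith

theorem tbi2_closed_formula {c : ℕ} (hc : 3 ≤ c) :
    (tbi2 c : ℚ) = ((3 * (c : ℚ) ^ 2 + 24 * c + 37) * 2 ^ (c - 1)
      + (12 * (c : ℚ) ^ 2 + 30 * c - 302) * (-1 : ℚ) ^ c) / 81 := by
  have hw : (fun k => (k + 2) ^ 2) = fun k => 1 * k ^ 2 + 4 * k + 4 := by
    funext k; ring
  rw [tbi2_eq_jacobsthalSum hc, hw, jacobsthalSum_quadratic]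
  obtain ⟨n, rfl⟩ := Nat.exists_eq_add_of_le' hc
  rw [show n + 3 - 2 = n + 1 by omega, show n + 3 - 1 = n + 2 by omega]
  push_cast
  ring

theorem tbi2_recursion_and_closed_formula :
    (∀ c : ℕ, 6 ≤ c →
      (tbi2 c : ℚ) = 3 * tbi2 (c - 2) + 2 * tbi2 (c - 3)
        + ((6 * (c : ℚ) + 17) * 2 ^ (c - 3) + 8 * (-1 : ℚ) ^ c) / 9) ∧
    (∀ c : ℕ, 3 ≤ c →
      (tbi2 c : ℚ) = ((3 * (c : ℚ) ^ 2 + 24 * c + 37) * 2 ^ (c - 1)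
        + (12 * (c : ℚ) ^ 2 + 30 * c - 302) * (-1 : ℚ) ^ c) / 81) := by
  refine ⟨fun c hc => ?_, fun c hc => tbi2_closed_formula hc⟩
  obtain ⟨n, rfl⟩ := Nat.exists_eq_add_of_le' hc
  rw [tbi2_closed_formula (by omega : 3 ≤ n + 6), tbi2_closed_formula (c := n + 6 - 2) (by omega),
    tbi2_closed_formula (c := n + 6 - 3) (by omega)]
  rw [show n + 6 - 2 = n + 4 by omega, show n + 6 - 3 = n + 3 by omega,
    show n + 6 - 1 = n + 5 by omega, show n + 4 - 1 = n + 3 by omega,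
    show n + 3 - 1 = n + 2 by omega]
  push_cast
  ring
end

section
/- Define tbi_p²(c) = Σ_b b²·e_p(c,b). For c ≥ 3, tbi_p²(c) equals ((6c²+36c+14)·2^{(c−1)/2} − (24c²+24c+8)·(−1)^{(c−1)/2})/81 if c is odd, and ((3c²+30c+43)·2^{c/2} + (24c²+48c+38)·(−1)^{c/2})/81 if c is even. -/
/-- The total palindromic square braid index. -/
noncomputable def tbip2 (c : ℕ) : ℕ := ∑ b ∈ Finset.Icc 2 ((c + 2) / 2), b ^ 2 * ep c b

open Finset

def diagSum (f : ℕ → ℚ) (n : ℕ) : ℚ :=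
  ∑ i ∈ range (n + 1), f i * 2 ^ i * (n - i).choose i

lemma sum_range_eq_diagSum (f : ℕ → ℚ) {n N : ℕ} (h : n < N) :
    ∑ i ∈ range N, f i * 2 ^ i * (n - i).choose i = diagSum f n := by
  refine (sum_subset (range_subset_range.2 h) fun i hi hi' => ?_).symm
  rw [mem_range] at hi hi'
  rw [Nat.choose_eq_zero_of_lt (by omega), Nat.cast_zero, mul_zero]

lemma diagSum_eq_sum_shift (f : ℕ → ℚ) {n N : ℕ} (h : n ≤ N) :
    diagSum f n =
      ∑ i ∈ range N, f (i + 1) * 2 ^ (i + 1) * (n - (i + 1)).choose (i + 1) + f 0 := by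
  rw [← sum_range_eq_diagSum f (show n < N + 1 by omega), sum_range_succ']
  simp

lemma choose_succ_sub_succ (n i : ℕ) :
    (n + 1 - i).choose (i + 1) = (n - i).choose (i + 1) + (n - i).choose i := by
  rcases le_or_gt i n with h | h
  · rw [show n + 1 - i = n - i + 1 by omega, Nat.choose_succ_succ, add_comm]
  · simp [show n + 1 - i = 0 by omega, show n - i = 0 by omega, Nat.choose_eq_zero_of_lt h.pos]

lemma diagSum_add_two (f : ℕ → ℚ) (n : ℕ) :
    diagSum f (n + 2) = diagSum f (n + 1) + 2 * diagSum (fun i => f (i + 1)) n := by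
  rw [diagSum_eq_sum_shift f (le_refl (n + 2)), diagSum_eq_sum_shift f (N := n + 2) (by omega),
    ← sum_range_eq_diagSum _ (show n < n + 2 by omega), mul_sum, add_right_comm,
    ← sum_add_distrib]
  refine congrArg (· + f 0) (sum_congr rfl fun i _ => ?_)
  rw [show n + 2 - (i + 1) = n + 1 - i by omega, show n + 1 - (i + 1) = n - i by omega,
    choose_succ_sub_succ]
  push_cast
  ring

theorem diagSum_quadratic (a b c : ℚ) (n : ℕ) :
    81 * diagSum (fun i => a * i ^ 2 + b * i + c) n =
      (a * (6 * n ^ 2 + 2) + b * (18 * n - 6) + 54 * c) * 2 ^ n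
        + (a * (12 * n ^ 2 + 6 * n - 2) + b * (18 * n + 6) + 27 * c) * (-1) ^ n := by
  induction n using Nat.twoStepInduction generalizing a b c with
  | zero => norm_num [diagSum]; ring
  | one => norm_num [diagSum, sum_range_succ]; ring
  | more n ih₀ ih₁ =>
    have hshift : (fun i : ℕ => a * ((i + 1 : ℕ) : ℚ) ^ 2 + b * ((i + 1 : ℕ) : ℚ) + c) =
        fun i : ℕ => a * (i : ℚ) ^ 2 + (2 * a + b) * i + (a + b + c) := by
      funext i; push_cast; ring
    rw [diagSum_add_two, hshift]
    push_cast at ih₁ ⊢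
    linear_combination ih₁ a b c + 2 * ih₀ a (2 * a + b) (a + b + c)

lemma sum_range_two_mul {M : Type*} [AddCommMonoid M] (f : ℕ → M) (n : ℕ) :
    ∑ i ∈ range (2 * n), f i = ∑ i ∈ range n, (f (2 * i) + f (2 * i + 1)) := by
  induction n with
  | zero => simp
  | succ n ih => rw [Nat.mul_succ, sum_range_succ, sum_range_succ, sum_range_succ, ih, add_assoc]

lemma ep_eq_zero_of_notMem {c b : ℕ} (h : b ∉ Icc 2 ((c + 2) / 2)) : ep c b = 0 := by
  rw [mem_Icc] at h
  rw [ep, if_neg (fun h' => h ⟨h'.1, h'.2.1⟩), if_neg (fun h' => h ⟨h'.1, h'.2.1⟩)]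

lemma tbip2_eq_sum_range {c N : ℕ} (h : (c + 2) / 2 < N) :
    tbip2 c = ∑ b ∈ range N, b ^ 2 * ep c b :=
  sum_subset (fun b hb => mem_range.2 (by rw [mem_Icc] at hb; omega))
    fun b _ hb => by rw [ep_eq_zero_of_notMem hb, mul_zero]

lemma tbip2_eq_sum_pairs {c k : ℕ} (h : (c + 2) / 2 < 2 * k + 4) :
    tbip2 c = ∑ i ∈ range (k + 1),
      ((2 * i + 2) ^ 2 * ep c (2 * i + 2) + (2 * i + 3) ^ 2 * ep c (2 * i + 3)) := by
  rw [tbip2_eq_sum_range (N := 2 * (k + 2)) (by omega), sum_range_two_mul, sum_range_succ',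
    ep_eq_zero_of_notMem (b := 2 * 0 + 1) (by simp)]
  simp only [mul_zero, add_zero, zero_pow two_ne_zero, zero_mul]
  rfl

lemma ep_odd_even (k i : ℕ) : ep (2 * k + 3) (2 * i + 2) = 2 ^ (i + 1) * (k - i).choose i := by
  rcases le_or_gt (2 * i) k with hik | hik
  · rw [ep, if_neg fun h => Nat.not_even_iff_odd.2 ⟨k + 1, by ring⟩ h.2.2.1,
      if_pos ⟨by omega, by omega, ⟨k + 1, by ring⟩, ⟨i + 1, by ring⟩⟩,
      show (2 * i + 2) / 2 = i + 1 by omega,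
      show (2 * k + 3 - (2 * i + 2) - 1) / 2 = k - i by omega,
      show (2 * i + 2 - 2) / 2 = i by omega]
  · rw [ep_eq_zero_of_notMem (by rw [mem_Icc]; omega), Nat.choose_eq_zero_of_lt (by omega),
      mul_zero]

lemma ep_odd_odd (k i : ℕ) : ep (2 * k + 3) (2 * i + 3) = 0 := by
  rw [ep, if_neg fun h => Nat.not_even_iff_odd.2 ⟨k + 1, by ring⟩ h.2.2.1,
    if_neg fun h => Nat.not_even_iff_odd.2 ⟨i + 1, by ring⟩ h.2.2.2]

lemma ep_even_odd (k i : ℕ) : ep (2 * k + 4) (2 * i + 3) = 2 ^ (i + 1) * (k - i).choose i := by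
  rcases le_or_gt (2 * i) k with hik | hik
  · rw [ep, if_pos ⟨by omega, by omega, ⟨k + 2, by ring⟩, ⟨i + 1, by ring⟩⟩,
      show (2 * i + 3 - 1) / 2 = i + 1 by omega,
      show (2 * k + 4 - (2 * i + 3) - 1) / 2 = k - i by omega,
      show (2 * i + 3 - 3) / 2 = i by omega]
  · rw [ep_eq_zero_of_notMem (by rw [mem_Icc]; omega), Nat.choose_eq_zero_of_lt (by omega),
      mul_zero]

lemma ep_even_even (k i : ℕ) : ep (2 * k + 4) (2 * i + 2) = 0 := by
  rw [ep, if_neg fun h => Nat.not_odd_iff_even.2 ⟨i + 1, by ring⟩ h.2.2.2,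
    if_neg fun h => Nat.not_odd_iff_even.2 ⟨k + 2, by ring⟩ h.2.2.1]

lemma tbip2_two_mul_add_three (k : ℕ) :
    (tbip2 (2 * k + 3) : ℚ) = 2 * diagSum (fun i => (2 * i + 2) ^ 2) k := by
  rw [tbip2_eq_sum_pairs (k := k) (by omega), ← sum_range_eq_diagSum _ (Nat.lt_succ_self k),
    mul_sum]
  simp only [ep_odd_even, ep_odd_odd]
  push_cast
  refine sum_congr rfl fun i _ => ?_
  ring

lemma tbip2_two_mul_add_four (k : ℕ) :
    (tbip2 (2 * k + 4) : ℚ) = 2 * diagSum (fun i => (2 * i + 3) ^ 2) k := by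
  rw [tbip2_eq_sum_pairs (k := k) (by omega), ← sum_range_eq_diagSum _ (Nat.lt_succ_self k),
    mul_sum]
  simp only [ep_even_odd, ep_even_even]
  push_cast
  refine sum_congr rfl fun i _ => ?_
  ring

theorem tbip2_closed_formula (c : ℕ) (hc : 3 ≤ c) :
    (tbip2 c : ℚ) =
      if Odd c then
        ((6 * (c : ℚ) ^ 2 + 36 * c + 14) * 2 ^ ((c - 1) / 2)
          - (24 * (c : ℚ) ^ 2 + 24 * c + 8) * (-1 : ℚ) ^ ((c - 1) / 2)) / 81
      else
        ((3 * (c : ℚ) ^ 2 + 30 * c + 43) * 2 ^ (c / 2)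
          + (24 * (c : ℚ) ^ 2 + 48 * c + 38) * (-1 : ℚ) ^ (c / 2)) / 81 := by
  rcases Nat.even_or_odd' c with ⟨k, rfl | rfl⟩
  · obtain ⟨k, rfl⟩ : ∃ j, k = j + 2 := ⟨k - 2, by omega⟩
    have hsq : (fun i : ℕ => (2 * (i : ℚ) + 3) ^ 2) =
        fun i : ℕ => 4 * (i : ℚ) ^ 2 + 12 * i + 9 :=
      funext fun i => by ring
    have h := diagSum_quadratic 4 12 9 k
    rw [if_neg (Nat.not_odd_iff_even.2 (even_two_mul _)), show 2 * (k + 2) / 2 = k + 2 by omega,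
      show 2 * (k + 2) = 2 * k + 4 by ring, tbip2_two_mul_add_four, hsq,
      eq_div_iff (by norm_num)]
    push_cast
    linear_combination 2 * h
  · obtain ⟨k, rfl⟩ : ∃ j, k = j + 1 := ⟨k - 1, by omega⟩
    have hsq : (fun i : ℕ => (2 * (i : ℚ) + 2) ^ 2) =
        fun i : ℕ => 4 * (i : ℚ) ^ 2 + 8 * i + 4 :=
      funext fun i => by ring
    have h := diagSum_quadratic 4 8 4 k
    rw [if_pos (odd_two_mul_add_one _), show (2 * (k + 1) + 1 - 1) / 2 = k + 1 by omega,
      show 2 * (k + 1) + 1 = 2 * k + 3 by ring, tbip2_two_mul_add_three, hsq,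
      eq_div_iff (by norm_num)]
    push_cast
    linear_combination 2 * h
end
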